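/- arXiv:1403.8111 — 5 statements merged into one kernel-verified Lean document; each statement's English description precedes it below -/
import Mathlib

section
/- With G(z) = i(zj + jV) and F(z) = -i(z² j + z jV - (i V_x - jV²)/2), where V = [[0,v],[v*,0]] depends on (x,t), the zero curvature equation G_t - F_x + [G,F] = 0 holds for all z ∈ ℂ if and only if v satisfies the defocusing NLS equation 2 v_t = i(v_{xx} - 2 v v* v). -/
open Matrix

/-- Zero curvature equation for the AKNS pair is equivalent to the defocusing NLS equation,
stated pointwise: `v, vt, vx, vxx` are the values of the matrix function and its
derivatives at a given point `(x, t)`. -/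
theorem stmt_1 (m₁ m₂ : ℕ) (v vt vx vxx : Matrix (Fin m₁) (Fin m₂) ℂ)
    (j V Vt Vx Vxx : Matrix (Fin m₁ ⊕ Fin m₂) (Fin m₁ ⊕ Fin m₂) ℂ)
    (hj : j = Matrix.fromBlocks 1 0 0 (-1))
    (hV : V = Matrix.fromBlocks 0 v vᴴ 0)
    (hVt : Vt = Matrix.fromBlocks 0 vt vtᴴ 0)
    (hVx : Vx = Matrix.fromBlocks 0 vx vxᴴ 0)
    (hVxx : Vxx = Matrix.fromBlocks 0 vxx vxxᴴ 0)
    (G F Gt Fx : ℂ → Matrix (Fin m₁ ⊕ Fin m₂) (Fin m₁ ⊕ Fin m₂) ℂ)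
    (hG : ∀ z, G z = Complex.I • (z • j + j * V))
    (hF : ∀ z, F z = -Complex.I •
      (z ^ 2 • j + z • (j * V) - (2 : ℂ)⁻¹ • (Complex.I • Vx - j * V * V)))
    -- `Gt` is the t-derivative of `G`, obtained by replacing `V` by `Vt`:
    (hGt : ∀ z, Gt z = Complex.I • (j * Vt))
    -- `Fx` is the x-derivative of `F`, obtained by the Leibniz rule:
    (hFx : ∀ z, Fx z = -Complex.I •
      (z • (j * Vx) - (2 : ℂ)⁻¹ • (Complex.I • Vxx - (j * Vx * V + j * V * Vx)))) :
    (∀ z : ℂ, Gt z - Fx z + (G z * F z - F z * G z) = 0) ↔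
      (2 : ℂ) • vt = Complex.I • (vxx - (2 : ℂ) • (v * vᴴ * v)) := by
  subst hj hV hVt hVx hVxx
  constructor
  · intro hz
    have e := hz 0
    rw [hG, hF, hGt, hFx] at e
    rw [show (0:Matrix (Fin m₁ ⊕ Fin m₂) (Fin m₁ ⊕ Fin m₂) ℂ) = Matrix.fromBlocks 0 0 0 0 by
      simp] at e
    simp only [sub_eq_add_neg, Matrix.fromBlocks_neg, Matrix.fromBlocks_smul,
      Matrix.fromBlocks_add, Matrix.fromBlocks_multiply, Matrix.smul_mul, Matrix.mul_smul,
      Matrix.one_mul, Matrix.mul_one, Matrix.zero_mul, Matrix.mul_zero, Matrix.add_mul,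
      Matrix.mul_add, Matrix.neg_mul, Matrix.mul_neg, Matrix.mul_assoc, smul_add, smul_neg,
      neg_neg, neg_add, smul_smul, mul_zero, zero_mul, mul_one, one_mul, add_zero, zero_add,
      mul_neg, neg_mul, neg_zero, smul_zero, zero_smul, neg_smul, mul_add, add_mul, mul_assoc,
      ne_eq, OfNat.ofNat_ne_zero, not_false_eq_true, zero_pow] at e
    rw [Matrix.fromBlocks_inj] at e
    obtain ⟨-, key, -, -⟩ := e
    simp only [mul_comm Complex.I, mul_left_comm, mul_assoc, Complex.I_mul_I] at key
    have key2 : Complex.I • vt = (2:ℂ)⁻¹ • ((2:ℂ) • (v * (vᴴ * v)) - vxx) := by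
      linear_combination (norm := module) key
    rw [show (2:ℂ) • vt = (-2 * Complex.I) • (Complex.I • vt) by
      rw [smul_smul, show (-2 * Complex.I * Complex.I : ℂ) = 2 by
        rw [mul_assoc, Complex.I_mul_I]; ring], key2, smul_smul, Matrix.mul_assoc]
    module
  · intro h z
    rw [hG, hF, hGt, hFx]
    rw [show (0:Matrix (Fin m₁ ⊕ Fin m₂) (Fin m₁ ⊕ Fin m₂) ℂ) = Matrix.fromBlocks 0 0 0 0 by
      simp]
    simp only [sub_eq_add_neg, Matrix.fromBlocks_neg, Matrix.fromBlocks_smul,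
      Matrix.fromBlocks_add, Matrix.fromBlocks_multiply, Matrix.smul_mul, Matrix.mul_smul,
      Matrix.one_mul, Matrix.mul_one, Matrix.zero_mul, Matrix.mul_zero, Matrix.add_mul,
      Matrix.mul_add, Matrix.neg_mul, Matrix.mul_neg, Matrix.mul_assoc, smul_add, smul_neg,
      neg_neg, neg_add, smul_smul, mul_zero, zero_mul, mul_one, one_mul, add_zero, zero_add,
      mul_neg, neg_mul, neg_zero, smul_zero, zero_smul, neg_smul, mul_add, add_mul, mul_assoc]
    rw [Matrix.fromBlocks_inj]
    refine ⟨?_, ?_, ?_, ?_⟩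
    all_goals try simp only [mul_comm Complex.I, mul_left_comm, mul_assoc, Complex.I_mul_I]
    all_goals try module
    all_goals
      have h3 : Complex.I • vt = (-(2:ℂ)⁻¹) • (vxx - (2:ℂ) • (v * (vᴴ * v))) := by
        rw [show Complex.I • vt = ((2:ℂ)⁻¹ * Complex.I) • ((2:ℂ) • vt) by module, h, smul_smul,
          show (2:ℂ)⁻¹ * Complex.I * Complex.I = -(2:ℂ)⁻¹ by rw [mul_assoc, Complex.I_mul_I]; ring,
          Matrix.mul_assoc]
    · linear_combination (norm := module) h3
    · have h' := congrArg Matrix.conjTranspose h3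
      simp only [Matrix.conjTranspose_neg, Matrix.conjTranspose_smul, Matrix.conjTranspose_mul,
        Matrix.conjTranspose_conjTranspose, Complex.star_def, Complex.conj_I,
        Matrix.conjTranspose_sub, neg_smul, Matrix.mul_assoc, map_neg, map_inv₀, map_ofNat,
        star_ofNat, star_neg, star_inv₀] at h'
      linear_combination (norm := module) h'
end

section
/- Let R be an m×m matrix, written in blocks R = [[R₁₁, R₁₂],[R₂₁, R₂₂]] conformal with j = diag(I_{m1}, -I_{m2}), satisfying R* j R ≥ j. If φ is an m2×m1 matrix with [I φ*] j [I; φ] ≥ 0 (i.e., φ*φ ≤ I_{m1}), then R₁₁ + R₁₂ φ is invertible. -/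
/-!
Suppose `(R₁₁ + R₁₂ φ) x = 0` and put `v = [x; φ x]`, so that the first block of `w = R v`
vanishes. Then `0 ≤ v* j v ≤ w* j w = -‖w₂‖² ≤ 0`, so `w = 0` and `v* (R* j R - j) v = 0`.
A positive semidefinite form vanishes only on its kernel, hence `j v = R* j R v = 0`,
and `v = 0` because `j² = 1`.
-/

open Matrix
open scoped ComplexOrder

namespace Matrix

variable {α : Type*} {l m n : Type*} [Fintype m] [Fintype n]

lemma star_dotProduct_conjTranspose_mul_mul_mulVec [CommSemiring α] [StarRing α] [Fintype l]
    (M : Matrix m m α) (S : Matrix m l α) (u : l → α) :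
    star u ⬝ᵥ (Sᴴ * M * S) *ᵥ u = star (S *ᵥ u) ⬝ᵥ M *ᵥ (S *ᵥ u) := by
  rw [← mulVec_mulVec, ← mulVec_mulVec, dotProduct_mulVec, ← star_mulVec]

lemma mulVec_fromRows_mulVec_comp_inl [Semiring α] {o p : Type*} [Fintype p]
    (M : Matrix (l ⊕ o) (m ⊕ n) α) (A : Matrix m p α) (B : Matrix n p α) (x : p → α) :
    (M *ᵥ (fromRows A B *ᵥ x)) ∘ Sum.inl = (M.toBlocks₁₁ * A + M.toBlocks₁₂ * B) *ᵥ x := by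
  conv_lhs =>
    rw [← fromBlocks_toBlocks M, mulVec_mulVec, fromBlocks_mul_fromRows, fromRows_mulVec]
  rfl

section Signature

variable [DecidableEq m] [DecidableEq n]

lemma fromBlocks_one_neg_one_mulVec [Ring α] (v : m ⊕ n → α) :
    fromBlocks 1 0 0 (-1) *ᵥ v = Sum.elim (v ∘ Sum.inl) (-(v ∘ Sum.inr)) := by
  simp [fromBlocks_mulVec, neg_mulVec]

lemma star_dotProduct_fromBlocks_one_neg_one_mulVec [Ring α] [StarRing α] (v : m ⊕ n → α) :
    star v ⬝ᵥ fromBlocks 1 0 0 (-1) *ᵥ v =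
      star (v ∘ Sum.inl) ⬝ᵥ (v ∘ Sum.inl) - star (v ∘ Sum.inr) ⬝ᵥ (v ∘ Sum.inr) := by
  simp [fromBlocks_one_neg_one_mulVec, dotProduct, Fintype.sum_sum_type, sub_eq_add_neg]

lemma eq_zero_of_fromBlocks_one_neg_one_mulVec_eq_zero [Ring α] {v : m ⊕ n → α}
    (hv : (fromBlocks 1 0 0 (-1) : Matrix (m ⊕ n) (m ⊕ n) α) *ᵥ v = 0) : v = 0 := by
  have hsq : (fromBlocks 1 0 0 (-1) : Matrix (m ⊕ n) (m ⊕ n) α) * fromBlocks 1 0 0 (-1) = 1 := by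
    simp [fromBlocks_multiply]
  rw [← one_mulVec v, ← hsq, ← mulVec_mulVec, hv, mulVec_zero]

variable {𝕜 : Type*} [RCLike 𝕜]

theorem eq_zero_of_posSemidef_conjTranspose_mul_mul_sub {R : Matrix (m ⊕ n) (m ⊕ n) 𝕜}
    (hR : (Rᴴ * fromBlocks 1 0 0 (-1) * R - fromBlocks 1 0 0 (-1)).PosSemidef) {v : m ⊕ n → 𝕜}
    (hv : 0 ≤ star v ⬝ᵥ fromBlocks 1 0 0 (-1) *ᵥ v) (hRv : (R *ᵥ v) ∘ Sum.inl = 0) : v = 0 := by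
  set J : Matrix (m ⊕ n) (m ⊕ n) 𝕜 := fromBlocks 1 0 0 (-1)
  set w := R *ᵥ v
  have hJw : star w ⬝ᵥ J *ᵥ w = -(star (w ∘ Sum.inr) ⬝ᵥ (w ∘ Sum.inr)) := by
    rw [star_dotProduct_fromBlocks_one_neg_one_mulVec, hRv]
    simp
  have hexp : star v ⬝ᵥ J *ᵥ v ≤ star w ⬝ᵥ J *ᵥ w := by
    have := hR.dotProduct_mulVec_nonneg v
    rwa [sub_mulVec, dotProduct_sub, star_dotProduct_conjTranspose_mul_mul_mulVec,
      sub_nonneg] at this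
  have hw₂ : star (w ∘ Sum.inr) ⬝ᵥ (w ∘ Sum.inr) = 0 :=
    le_antisymm (neg_nonneg.mp (hJw ▸ hv.trans hexp)) (dotProduct_star_self_nonneg _)
  have hw : w = 0 := by
    ext (i | i)
    · exact congrFun hRv i
    · exact congrFun (dotProduct_star_self_eq_zero.mp hw₂) i
  have hJv : star v ⬝ᵥ J *ᵥ v = 0 := le_antisymm (by simpa [hJw, hw₂] using hexp) hv
  have hker : (Rᴴ * J * R - J) *ᵥ v = 0 := by
    rw [← hR.dotProduct_mulVec_zero_iff, sub_mulVec, dotProduct_sub,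
      star_dotProduct_conjTranspose_mul_mul_mulVec, hJv, show R *ᵥ v = 0 from hw]
    simp
  rw [sub_mulVec, ← mulVec_mulVec, ← mulVec_mulVec] at hker
  exact eq_zero_of_fromBlocks_one_neg_one_mulVec_eq_zero (by simpa [w, hw] using hker)

end Signature
end Matrix

theorem stmt_6 (m₁ m₂ : ℕ)
    (j R : Matrix (Fin m₁ ⊕ Fin m₂) (Fin m₁ ⊕ Fin m₂) ℂ)
    (hj : j = Matrix.fromBlocks 1 0 0 (-1))
    (hR : (Rᴴ * j * R - j).PosSemidef)
    (φ : Matrix (Fin m₂) (Fin m₁) ℂ)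
    (hφ : ((Matrix.fromRows (1 : Matrix (Fin m₁) (Fin m₁) ℂ) φ)ᴴ * j *
      Matrix.fromRows (1 : Matrix (Fin m₁) (Fin m₁) ℂ) φ).PosSemidef) :
    (R.toBlocks₁₁ + R.toBlocks₁₂ * φ).det ≠ 0 := by
  subst hj
  rw [Ne, ← exists_mulVec_eq_zero_iff]
  rintro ⟨x, hx, hRx⟩
  have hv : fromRows (1 : Matrix (Fin m₁) (Fin m₁) ℂ) φ *ᵥ x = 0 := by
    refine eq_zero_of_posSemidef_conjTranspose_mul_mul_sub hR ?_ ?_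
    · simpa only [star_dotProduct_conjTranspose_mul_mul_mulVec] using hφ.dotProduct_mulVec_nonneg x
    · rw [mulVec_fromRows_mulVec_comp_inl, mul_one, hRx]
  exact hx (by simpa using congrArg (· ∘ Sum.inl) hv)
end

section
/- Let j = diag(I_{m1}, -I_{m2}) and let R = [[R₁₁,R₁₂],[R₂₁,R₂₂]] satisfy R* j R ≤ j together with R₂₂* R₂₂ - R₁₂* R₁₂ ≥ I_{m2} at the initial time (e.g., R starting at I_m under a monotone flow). Then R₂₂ is invertible and ‖R₂₂⁻¹‖ ≤ 1. -/
/-!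
Since `R₂₂ᴴ R₂₂ - 1 ≥ R₁₂ᴴ R₁₂ ≥ 0`, we get `‖R₂₂ x‖ ≥ ‖x‖` for every vector `x`. Hence `R₂₂` is
injective, so invertible, and `‖R₂₂⁻¹ y‖ ≤ ‖R₂₂ R₂₂⁻¹ y‖ = ‖y‖`.
-/

open Matrix WithLp
open scoped ComplexOrder Matrix.Norms.L2Operator

namespace Matrix

variable {𝕜 l m n : Type*} [RCLike 𝕜] [Fintype l] [Fintype m] [Fintype n] [DecidableEq n]

theorem PosSemidef.conjTranspose_mul_self_sub_one_of_sub {A : Matrix m n 𝕜} {B : Matrix l n 𝕜}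
    (h : (Aᴴ * A - Bᴴ * B - 1).PosSemidef) : (Aᴴ * A - 1).PosSemidef := by
  simpa only [sub_right_comm _ (Bᴴ * B), sub_add_cancel] using
    h.add (posSemidef_conjTranspose_mul_self B)

theorem PosSemidef.norm_le_norm_toEuclideanLin {A : Matrix m n 𝕜} (h : (Aᴴ * A - 1).PosSemidef)
    (x : EuclideanSpace 𝕜 n) : ‖x‖ ≤ ‖toEuclideanLin A x‖ := by
  have hA : star (A *ᵥ ofLp x) ⬝ᵥ (A *ᵥ ofLp x) = (‖toEuclideanLin A x‖ : 𝕜) ^ 2 := by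
    rw [← inner_self_eq_norm_sq_to_K, EuclideanSpace.inner_eq_star_dotProduct, dotProduct_comm]
    rfl
  have hx : star (ofLp x) ⬝ᵥ ofLp x = (‖x‖ : 𝕜) ^ 2 := by
    rw [← inner_self_eq_norm_sq_to_K, EuclideanSpace.inner_eq_star_dotProduct, dotProduct_comm]
  have key : 0 ≤ star (ofLp x) ⬝ᵥ ((Aᴴ * A - 1) *ᵥ ofLp x) := h.dotProduct_mulVec_nonneg _
  rw [sub_mulVec, dotProduct_sub, one_mulVec, ← mulVec_mulVec, dotProduct_mulVec,
    ← star_mulVec, hA, hx, sub_nonneg] at key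
  exact pow_le_pow_iff_left₀ (norm_nonneg _) (norm_nonneg _) two_ne_zero |>.mp
    (by exact_mod_cast key)

variable {A : Matrix n n 𝕜}

theorem isUnit_of_norm_le_norm_toEuclideanLin (h : ∀ x, ‖x‖ ≤ ‖toEuclideanLin A x‖) :
    IsUnit A := by
  have hT : Function.Injective (toEuclideanLin A) := (injective_iff_map_eq_zero _).mpr
    fun x hx => norm_le_zero_iff.mp (by simpa [hx] using h x)
  exact mulVec_injective_iff_isUnit.mp fun v w hvw => by
    simpa using @hT (toLp 2 v) (toLp 2 w) (by simp [toLpLin_apply, hvw])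

theorem l2_opNorm_inv_le_one (h : ∀ x, ‖x‖ ≤ ‖toEuclideanLin A x‖) : ‖A⁻¹‖ ≤ 1 := by
  have hA := (isUnit_iff_isUnit_det A).mp (isUnit_of_norm_le_norm_toEuclideanLin h)
  rw [l2_opNorm_def]
  refine ContinuousLinearMap.opNorm_le_bound _ zero_le_one fun y => ?_
  simpa [toLpLin_apply, mulVec_mulVec, mul_nonsing_inv _ hA] using h (toEuclideanLin A⁻¹ y)

end Matrix

theorem stmt_7_general (m₁ m₂ : ℕ)
    (R : Matrix (Fin m₁ ⊕ Fin m₂) (Fin m₁ ⊕ Fin m₂) ℂ)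
    (hR22 : ((R.toBlocks₂₂)ᴴ * R.toBlocks₂₂ - (R.toBlocks₁₂)ᴴ * R.toBlocks₁₂ -
      (1 : Matrix (Fin m₂) (Fin m₂) ℂ)).PosSemidef) :
    IsUnit R.toBlocks₂₂ ∧ ‖(R.toBlocks₂₂)⁻¹‖ ≤ 1 := by
  have h := hR22.conjTranspose_mul_self_sub_one_of_sub.norm_le_norm_toEuclideanLin
  exact ⟨isUnit_of_norm_le_norm_toEuclideanLin h, l2_opNorm_inv_le_one h⟩

theorem stmt_7 (m₁ m₂ : ℕ)
    (j R : Matrix (Fin m₁ ⊕ Fin m₂) (Fin m₁ ⊕ Fin m₂) ℂ)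
    (hj : j = Matrix.fromBlocks 1 0 0 (-1))
    (hR : (j - Rᴴ * j * R).PosSemidef)
    (hR22 : ((R.toBlocks₂₂)ᴴ * R.toBlocks₂₂ - (R.toBlocks₁₂)ᴴ * R.toBlocks₁₂ -
      (1 : Matrix (Fin m₂) (Fin m₂) ℂ)).PosSemidef) :
    IsUnit R.toBlocks₂₂ ∧ ‖(R.toBlocks₂₂)⁻¹‖ ≤ 1 :=
  stmt_7_general m₁ m₂ R hR22
end

section
/- Let P be an m×m1 matrix (m = m1+m2) with P*P > 0 and P* j P ≥ 0, where j = diag(I_{m1}, -I_{m2}). Write P = [P₁; P₂] with P₁ of size m1×m1 and P₂ of size m2×m1. Then P₁ is invertible, and φ := P₂ P₁⁻¹ satisfies φ*φ ≤ I_{m1} (i.e., φ is a contraction). -/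
open Matrix
open scoped ComplexOrder

/-! Since `PᴴP = P₁ᴴP₁ + P₂ᴴP₂` and `Pᴴ j P = P₁ᴴP₁ - P₂ᴴP₂`, their sum `2 P₁ᴴP₁` is positive
definite, so `P₁` is invertible; and `1 - φᴴφ = (P₁⁻¹)ᴴ (Pᴴ j P) P₁⁻¹` is positive semidefinite. -/

namespace Matrix

variable {𝕜 : Type*} {m₁ m₂ n : Type*}

lemma conjTranspose_fromRows_mul_fromRows [Fintype m₁] [Fintype m₂] [Semiring 𝕜]
    [StarRing 𝕜] (A₁ : Matrix m₁ n 𝕜) (A₂ : Matrix m₂ n 𝕜) :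
    (fromRows A₁ A₂)ᴴ * fromRows A₁ A₂ = A₁ᴴ * A₁ + A₂ᴴ * A₂ := by
  rw [conjTranspose_fromRows_eq_fromCols_conjTranspose, fromCols_mul_fromRows]

lemma conjTranspose_fromRows_mul_fromBlocks_one_neg_one_mul_fromRows [Fintype m₁] [Fintype m₂]
    [DecidableEq m₁] [DecidableEq m₂] [Ring 𝕜] [StarRing 𝕜]
    (A₁ : Matrix m₁ n 𝕜) (A₂ : Matrix m₂ n 𝕜) :
    (fromRows A₁ A₂)ᴴ * (fromBlocks 1 0 0 (-1) : Matrix (m₁ ⊕ m₂) (m₁ ⊕ m₂) 𝕜) * fromRows A₁ A₂ =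
      A₁ᴴ * A₁ - A₂ᴴ * A₂ := by
  rw [Matrix.mul_assoc, fromBlocks_mul_fromRows, conjTranspose_fromRows_eq_fromCols_conjTranspose,
    fromCols_mul_fromRows]
  simp only [Matrix.one_mul, Matrix.zero_mul, add_zero, zero_add, Matrix.neg_mul, Matrix.mul_neg,
    sub_eq_add_neg]

lemma PosDef.of_add_of_sub [RCLike 𝕜] {A B : Matrix n n 𝕜} (hadd : (A + B).PosDef)
    (hsub : (A - B).PosSemidef) : A.PosDef := by
  have htwice : (A + A).PosDef := by
    simpa only [add_add_sub_cancel] using hadd.add_posSemidef hsub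
  simpa [← two_smul ℝ A, smul_smul] using htwice.smul (inv_pos.mpr (two_pos : (0 : ℝ) < 2))

lemma det_ne_zero_of_posDef_conjTranspose_mul_self [Fintype n] [DecidableEq n] [Field 𝕜]
    [PartialOrder 𝕜] [StarRing 𝕜] {A : Matrix n n 𝕜} (h : (Aᴴ * A).PosDef) : A.det ≠ 0 := by
  have := (isUnit_iff_isUnit_det _).mp h.isUnit
  rw [det_mul, det_conjTranspose] at this
  exact (isUnit_of_mul_isUnit_right this).ne_zero

lemma one_sub_conjTranspose_mul_inv_mul_mul_inv {m : Type*} [Fintype m] [Fintype n]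
    [DecidableEq n] [Field 𝕜] [StarRing 𝕜] {A : Matrix n n 𝕜} (B : Matrix m n 𝕜)
    (hA : IsUnit A.det) :
    1 - (B * A⁻¹)ᴴ * (B * A⁻¹) = (A⁻¹)ᴴ * (Aᴴ * A - Bᴴ * B) * A⁻¹ := by
  have hinv : A * A⁻¹ = 1 := mul_nonsing_inv A hA
  rw [Matrix.mul_sub, Matrix.sub_mul, ← Matrix.mul_assoc (A⁻¹)ᴴ, ← conjTranspose_mul, hinv,
    conjTranspose_one, Matrix.one_mul, hinv, conjTranspose_mul]
  simp only [Matrix.mul_assoc]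

end Matrix

theorem stmt_8 (m₁ m₂ : ℕ)
    (j : Matrix (Fin m₁ ⊕ Fin m₂) (Fin m₁ ⊕ Fin m₂) ℂ)
    (hj : j = Matrix.fromBlocks 1 0 0 (-1))
    (P : Matrix (Fin m₁ ⊕ Fin m₂) (Fin m₁) ℂ)
    (hP1 : (Pᴴ * P).PosDef) (hP2 : (Pᴴ * j * P).PosSemidef)
    (P₁ : Matrix (Fin m₁) (Fin m₁) ℂ) (P₂ : Matrix (Fin m₂) (Fin m₁) ℂ)
    (hP₁ : P₁ = P.submatrix Sum.inl id) (hP₂ : P₂ = P.submatrix Sum.inr id) :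
    P₁.det ≠ 0 ∧
      ((1 : Matrix (Fin m₁) (Fin m₁) ℂ) - (P₂ * P₁⁻¹)ᴴ * (P₂ * P₁⁻¹)).PosSemidef := by
  have hP : P = fromRows P₁ P₂ := by
    subst hP₁ hP₂
    exact (fromRows_toRows P).symm
  rw [hP, conjTranspose_fromRows_mul_fromRows] at hP1
  rw [hj, hP, conjTranspose_fromRows_mul_fromBlocks_one_neg_one_mul_fromRows] at hP2
  have hdet : P₁.det ≠ 0 :=
    det_ne_zero_of_posDef_conjTranspose_mul_self (hP1.of_add_of_sub hP2)
  refine ⟨hdet, ?_⟩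
  rw [one_sub_conjTranspose_mul_inv_mul_mul_inv P₂ (isUnit_iff_ne_zero.mpr hdet)]
  exact hP2.conjTranspose_mul_mul_same _
end

section
/- Suppose f, f_t and f_{tx} exist and are continuous on the closed rectangle [0,ε]×[0,ε̂], and f_x(x,0) exists for all x ∈ [0,ε]. Then f_x and f_{xt} exist everywhere on [0,ε]×[0,ε̂] and f_{xt} = f_{tx}. -/
/-!
Extend `f_tx` from the rectangle to a continuous `F` on the plane (Tietze) and put
`Ψ(x, t) = ∫₀ˣ ∫₀ᵗ F(u, s) ds du`. By Fubini and the fundamental theorem of calculus in `x`,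
the `t`-derivative of `f(x, s) - f(0, s) - Ψ(x, s)` is
`f_t(x, s) - f_t(0, s) - ∫₀ˣ f_tx(u, s) du = 0`, so
`f(x, t) = f(x, 0) + f(0, t) - f(0, 0) + Ψ(x, t)`. Differentiating in `x` gives
`f_x(x, t) = f_x(x, 0) + ∫₀ᵗ F(x, s) ds`, whose `t`-derivative is `f_tx(x, t)`.
-/

open Set Function intervalIntegral MeasureTheory

universe u v

theorem ContinuousOn.exists_continuous_eqOn {X : Type u} {Y : Type v} [TopologicalSpace X]
    [NormalSpace X] [TopologicalSpace Y] [TietzeExtension.{u, v} Y] {s : Set X} {g : X → Y}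
    (hg : ContinuousOn g s) (hs : IsClosed s) : ∃ G : X → Y, Continuous G ∧ EqOn G g s := by
  obtain ⟨G, hG⟩ :=
    ContinuousMap.exists_restrict_eq hs ⟨s.domRestrict g, hg.domRestrict⟩
  exact ⟨G, G.continuous, fun x hx => congrFun (congrArg DFunLike.coe hG) ⟨x, hx⟩⟩

variable {E : Type*} [NormedAddCommGroup E] [NormedSpace ℝ E] [CompleteSpace E]

theorem integral_eq_sub_of_hasDerivWithinAt_of_Icc_subset {g g' : ℝ → E} {a b : ℝ}
    {s : Set ℝ} (hab : a ≤ b) (hs : Icc a b ⊆ s)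
    (hderiv : ∀ x ∈ Icc a b, HasDerivWithinAt g (g' x) s x)
    (hint : IntervalIntegrable g' volume a b) : ∫ x in a..b, g' x = g b - g a :=
  integral_eq_sub_of_hasDeriv_right_of_le hab
    (fun x hx => ((hderiv x hx).continuousWithinAt).mono hs)
    (fun x hx => ((hderiv x (Ioo_subset_Icc_self hx)).hasDerivAt
      (Filter.mem_of_superset (Icc_mem_nhds hx.1 hx.2) hs)).hasDerivWithinAt)
    hint

theorem hasDerivAt_intervalIntegral_intervalIntegral_upper {F : ℝ → ℝ → E}
    (hF : Continuous (uncurry F)) (a x c t : ℝ) :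
    HasDerivAt (fun τ => ∫ u in a..x, ∫ s in c..τ, F u s) (∫ u in a..x, F u t) t := by
  have hswap : (fun τ => ∫ u in a..x, ∫ s in c..τ, F u s) =
      fun τ => ∫ s in c..τ, ∫ u in a..x, F u s := by
    funext τ
    refine intervalIntegral_intervalIntegral_swap ?_
    exact (hF.continuousOn.integrableOn_compact (isCompact_uIcc.prod isCompact_uIcc)).mono_set
      (prod_mono uIoc_subset_uIcc uIoc_subset_uIcc)
  rw [hswap]
  exact ((continuous_parametric_intervalIntegral_of_continuous' (f := fun s u => F u s)
    (μ := volume) (hF.comp continuous_swap) a x).integral_hasStrictDerivAt c t).hasDerivAt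

theorem eq_add_intervalIntegral_intervalIntegral_of_hasDerivWithinAt {f ft F : ℝ → ℝ → E}
    {a b c d : ℝ}
    (hft : ∀ x ∈ Icc a b, ∀ t ∈ Icc c d, HasDerivWithinAt (f x ·) (ft x t) (Icc c d) t)
    (hftx : ∀ x ∈ Icc a b, ∀ t ∈ Icc c d, HasDerivWithinAt (ft · t) (F x t) (Icc a b) x)
    (hF : Continuous (uncurry F)) {x t : ℝ} (hx : x ∈ Icc a b) (ht : t ∈ Icc c d) :
    f x t = f x c + (f a t - f a c) + ∫ u in a..x, ∫ s in c..t, F u s := by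
  have ha : a ∈ Icc a b := left_mem_Icc.2 (hx.1.trans hx.2)
  have hft_sub : ∀ s ∈ Icc c d, ∫ u in a..x, F u s = ft x s - ft a s := fun s hs =>
    integral_eq_sub_of_hasDerivWithinAt_of_Icc_subset hx.1 (Icc_subset_Icc_right hx.2)
      (fun u hu => hftx u (Icc_subset_Icc_right hx.2 hu) s hs)
      ((hF.uncurry_right s).intervalIntegrable a x)
  have hconst : ∫ _ in c..t, (0 : E) =
      (f x t - f a t - ∫ u in a..x, ∫ s in c..t, F u s) -
        (f x c - f a c - ∫ u in a..x, ∫ s in c..c, F u s) := by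
    refine integral_eq_sub_of_hasDerivWithinAt_of_Icc_subset
      (g := fun s => f x s - f a s - ∫ u in a..x, ∫ r in c..s, F u r) ht.1
      (Icc_subset_Icc_right ht.2) (fun s hs => ?_) intervalIntegrable_const
    have hs' : s ∈ Icc c d := Icc_subset_Icc_right ht.2 hs
    convert ((hft x hx s hs').fun_sub (hft a ha s hs')).fun_sub
      (hasDerivAt_intervalIntegral_intervalIntegral_upper hF a x c s).hasDerivWithinAt using 1
    rw [hft_sub s hs', sub_self]
  simp only [intervalIntegral.integral_zero, integral_same, sub_zero] at hconst
  linear_combination (norm := module) -hconst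

theorem stmt_10_general (ε εhat : ℝ)
    (f ft ftx : ℝ → ℝ → ℂ)
    -- `ft` is the partial derivative of `f` in `t` on the rectangle:
    (hft : ∀ x ∈ Icc 0 ε, ∀ t ∈ Icc 0 εhat,
      HasDerivWithinAt (fun s => f x s) (ft x t) (Icc 0 εhat) t)
    -- `ftx` is the partial derivative of `ft` in `x` on the rectangle:
    (hftx : ∀ x ∈ Icc 0 ε, ∀ t ∈ Icc 0 εhat,
      HasDerivWithinAt (fun y => ft y t) (ftx x t) (Icc 0 ε) x)
    (hftxc : ContinuousOn (fun p : ℝ × ℝ => ftx p.1 p.2) (Icc 0 ε ×ˢ Icc 0 εhat))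
    -- `f_x(x, 0)` exists for all `x ∈ [0, ε]`:
    (hfx0 : ∀ x ∈ Icc 0 ε, ∃ d : ℂ, HasDerivWithinAt (fun y => f y 0) d (Icc 0 ε) x) :
    ∃ fx : ℝ → ℝ → ℂ,
      (∀ x ∈ Icc 0 ε, ∀ t ∈ Icc 0 εhat,
        HasDerivWithinAt (fun y => f y t) (fx x t) (Icc 0 ε) x) ∧
      (∀ x ∈ Icc 0 ε, ∀ t ∈ Icc 0 εhat,
        HasDerivWithinAt (fun s => fx x s) (ftx x t) (Icc 0 εhat) t) := by
  obtain ⟨G, hG, hGeq⟩ := hftxc.exists_continuous_eqOn (isClosed_Icc.prod isClosed_Icc)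
  have hF : Continuous (uncurry (curry G)) := by rwa [uncurry_curry]
  have hFeq : ∀ x ∈ Icc 0 ε, ∀ t ∈ Icc 0 εhat, curry G x t = ftx x t :=
    fun x hx t ht => hGeq ⟨hx, ht⟩
  have hftF : ∀ x ∈ Icc 0 ε, ∀ t ∈ Icc 0 εhat,
      HasDerivWithinAt (fun y => ft y t) (curry G x t) (Icc 0 ε) x := fun x hx t ht =>
    hFeq x hx t ht ▸ hftx x hx t ht
  choose! d hd using hfx0
  refine ⟨fun x t => d x + ∫ s in (0 : ℝ)..t, curry G x s, fun x hx t ht => ?_,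
    fun x hx t ht => ?_⟩
  · have hrep := fun y (hy : y ∈ Icc 0 ε) =>
      eq_add_intervalIntegral_intervalIntegral_of_hasDerivWithinAt hft hftF hF hy ht
    have hΨ := (continuous_parametric_intervalIntegral_of_continuous' (μ := volume) hF 0 t
      |>.integral_hasStrictDerivAt 0 x).hasDerivAt
    exact (((hd x hx).add_const _).add hΨ.hasDerivWithinAt).congr hrep (hrep x hx)
  · have hint := ((hF.uncurry_left x).integral_hasStrictDerivAt 0 t).hasDerivAt
    rw [← hFeq x hx t ht]
    exact hint.hasDerivWithinAt.const_add (d x)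

/-- Strengthened Clairaut/Schwarz theorem on a closed rectangle with one-sided derivatives. -/
theorem stmt_10 (ε εhat : ℝ) (hε : 0 < ε) (hεhat : 0 < εhat)
    (f ft ftx : ℝ → ℝ → ℂ)
    (hf : ContinuousOn (fun p : ℝ × ℝ => f p.1 p.2) (Icc 0 ε ×ˢ Icc 0 εhat))
    -- `ft` is the partial derivative of `f` in `t` on the rectangle:
    (hft : ∀ x ∈ Icc 0 ε, ∀ t ∈ Icc 0 εhat,
      HasDerivWithinAt (fun s => f x s) (ft x t) (Icc 0 εhat) t)
    (hftc : ContinuousOn (fun p : ℝ × ℝ => ft p.1 p.2) (Icc 0 ε ×ˢ Icc 0 εhat))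
    -- `ftx` is the partial derivative of `ft` in `x` on the rectangle:
    (hftx : ∀ x ∈ Icc 0 ε, ∀ t ∈ Icc 0 εhat,
      HasDerivWithinAt (fun y => ft y t) (ftx x t) (Icc 0 ε) x)
    (hftxc : ContinuousOn (fun p : ℝ × ℝ => ftx p.1 p.2) (Icc 0 ε ×ˢ Icc 0 εhat))
    -- `f_x(x, 0)` exists for all `x ∈ [0, ε]`:
    (hfx0 : ∀ x ∈ Icc 0 ε, ∃ d : ℂ, HasDerivWithinAt (fun y => f y 0) d (Icc 0 ε) x) :
    ∃ fx : ℝ → ℝ → ℂ,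
      (∀ x ∈ Icc 0 ε, ∀ t ∈ Icc 0 εhat,
        HasDerivWithinAt (fun y => f y t) (fx x t) (Icc 0 ε) x) ∧
      (∀ x ∈ Icc 0 ε, ∀ t ∈ Icc 0 εhat,
        HasDerivWithinAt (fun s => fx x s) (ftx x t) (Icc 0 εhat) t) :=
  stmt_10_general ε εhat f ft ftx hft hftx hftxc hfx0
end
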